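/- Let n = 1. Every finite set S of arcs of M̄₁ which is connected, has complete orbit and is minimal has homological length exactly 1. (Equivalently: every minimal generator of the Paquette–Yıldırım category C̄₁ has homological length 1, whence the Orlov spectrum of C̄₁ equals {1}.) -/

import Mathlib

/-! Combinatorial model of the Paquette–Yıldırım completed cluster category `C̄ₙ`.

The set of marked points `M̄ₙ` consists of the marked points `(k, i)` (the `k`-th marked
point of the `i`-th segment, for `i : Fin n`) together with the accumulation points
(indexed by `Fin n`; `Sum.inr i` is the accumulation point `a_{i+1}` of the paper). -/

/-- The marked points of `M̄ₙ`: `Sum.inl (k, i)` is a marked point of a segment,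
`Sum.inr i` is an accumulation point. -/
abbrev MbarPt (n : ℕ) := (ℤ × Fin n) ⊕ Fin n

/-- The injection of `M̄ₙ` into the circle `ℝ/nℤ`, given by representatives in `[0, n)`:
the accumulation point `i` goes to `i`, and the marked point `(k, i)` goes to
`i + 1/2 + k/(2(|k|+1))`. -/
noncomputable def toCircle {n : ℕ} : MbarPt n → ℝ
  | Sum.inl (k, i) => (i : ℝ) + 1 / 2 + (k : ℝ) / (2 * (|(k : ℝ)| + 1))
  | Sum.inr i => (i : ℝ)

/-- `y` lies strictly between `x` and `z` in the cyclic order on `M̄ₙ` (going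
counterclockwise from `x` to `z`), expressed via the representatives in `[0, n)`. -/
def CycSBtw {n : ℕ} (x y z : MbarPt n) : Prop :=
  (toCircle x < toCircle y ∧ toCircle y < toCircle z) ∨
  (toCircle y < toCircle z ∧ toCircle z < toCircle x) ∨
  (toCircle z < toCircle x ∧ toCircle x < toCircle y)

/-- An arc of `M̄ₙ` is an unordered pair of distinct points of `M̄ₙ` which is not a pair
of consecutive marked points `{(k,i), (k+1,i)}` of a segment. -/
def IsArc {n : ℕ} (p : Sym2 (MbarPt n)) : Prop :=
  ¬ p.IsDiag ∧ ∀ (k : ℤ) (i : Fin n),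
    p ≠ s(Sum.inl (k, i), Sum.inl (k + 1, i))

/-- The `m`-fold clockwise rotation of a point: marked points `(k, i)` move to `(k - m, i)`,
accumulation points are fixed. -/
def rotPt {n : ℕ} (m : ℤ) : MbarPt n → MbarPt n
  | Sum.inl (k, i) => Sum.inl (k - m, i)
  | Sum.inr i => Sum.inr i

/-- The `m`-fold clockwise rotation `ℓ⟦m⟧` of an arc. -/
def rotArc {n : ℕ} (m : ℤ) (p : Sym2 (MbarPt n)) : Sym2 (MbarPt n) :=
  Sym2.map (rotPt m) p

/-- `p` and `q` are rotations of one another. -/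
def SameRot {n : ℕ} (p q : Sym2 (MbarPt n)) : Prop :=
  ∃ m : ℤ, p = rotArc m q

/-- The rotation closure `R(S)` of a set of arcs `S`. -/
def RClos {n : ℕ} (S : Set (Sym2 (MbarPt n))) : Set (Sym2 (MbarPt n)) :=
  {q | ∃ p ∈ S, ∃ m : ℤ, q = rotArc m p}

/-- Two arcs cross if their endpoints alternate in the cyclic order: exactly one
endpoint of one lies strictly between the two endpoints of the other. -/
def Crosses {n : ℕ} (p q : Sym2 (MbarPt n)) : Prop :=
  ∃ x y z w : MbarPt n, p = s(x, y) ∧ q = s(z, w) ∧ CycSBtw x z y ∧ CycSBtw y w x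

/-- Adjacency `ℓ ~ ℓ'` of arcs: they cross, or they are distinct and share an endpoint
which is an accumulation point. -/
def Adj {n : ℕ} (p q : Sym2 (MbarPt n)) : Prop :=
  Crosses p q ∨ (p ≠ q ∧ ∃ i : Fin n, (Sum.inr i : MbarPt n) ∈ p ∧ (Sum.inr i : MbarPt n) ∈ q)

/-- Paths of length `m` in the graph with vertex set `T` and edge relation `Adj`. -/
def AdjChain {n : ℕ} (T : Set (Sym2 (MbarPt n))) : ℕ → Sym2 (MbarPt n) → Sym2 (MbarPt n) → Prop
  | 0, p, q => p = q
  | m + 1, p, q => ∃ r ∈ T, Adj p r ∧ AdjChain T m r q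

/-- `S` is connected: the graph with vertex set `R(S)` and edge relation `~` is connected. -/
def ConnectedArcs {n : ℕ} (S : Set (Sym2 (MbarPt n))) : Prop :=
  ∀ p ∈ RClos S, ∀ q ∈ RClos S, ∃ m : ℕ, AdjChain (RClos S) m p q

/-- `S` has complete orbit: every point of `M̄ₙ` is an endpoint of some arc of `R(S)`. -/
def CompleteOrbit {n : ℕ} (S : Set (Sym2 (MbarPt n))) : Prop :=
  ∀ x : MbarPt n, ∃ p ∈ RClos S, x ∈ p

/-- `S` is minimal: removing any arc of `S` destroys connectedness or completeness of orbit. -/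
def MinimalArcSet {n : ℕ} (S : Set (Sym2 (MbarPt n))) : Prop :=
  ∀ ℓ ∈ S, ¬ (ConnectedArcs (S \ {ℓ}) ∧ CompleteOrbit (S \ {ℓ}))

/-- The homological length of (a connected) `S` is at most `d`: any two vertices of
`R(S)` are joined by a `~`-path of length at most `d`. -/
def HLenLE {n : ℕ} (S : Set (Sym2 (MbarPt n))) (d : ℕ) : Prop :=
  ∀ p ∈ RClos S, ∀ q ∈ RClos S, ∃ m ≤ d, AdjChain (RClos S) m p q

/-- The homological length of (a connected) `S` is exactly `d`: every pair of vertices of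
`R(S)` is joined by a path of length `≤ d`, and some pair admits no path of length `< d`. -/
def HLenEq {n : ℕ} (S : Set (Sym2 (MbarPt n))) (d : ℕ) : Prop :=
  HLenLE S d ∧ ∃ p ∈ RClos S, ∃ q ∈ RClos S, ∀ m < d, ¬ AdjChain (RClos S) m p q

/-! With a single accumulation point `a`, the arcs `{k, a}` form one rotation orbit of pairwise
adjacent arcs, and every arc is adjacent to one of them (an arc `{j, l}` with `j + 1 < l` crosses
`{j + 1, a}`). Hence any set of arcs containing some `{k, a}` is already connected and of complete
orbit, and complete orbit forces such an arc into `S`; so a minimal generator is a single arc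
`{k, a}`, whose rotation closure is a complete graph on more than one vertex. -/

theorem strictMono_div_two_mul_abs_add_one : StrictMono fun x : ℝ => x / (2 * (|x| + 1)) := by
  intro x y hxy
  simp only
  rw [div_lt_div_iff₀ (by positivity) (by positivity)]
  rcases abs_cases x with ⟨hx, hx₀⟩ | ⟨hx, hx₀⟩ <;> rcases abs_cases y with ⟨hy, hy₀⟩ | ⟨hy, hy₀⟩ <;>
    rw [hx, hy] <;> nlinarith

theorem neg_half_lt_div_two_mul_abs_add_one (x : ℝ) : -(1 / 2) < x / (2 * (|x| + 1)) := by
  rw [lt_div_iff₀ (by positivity)]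
  nlinarith [neg_abs_le x]

section General

variable {n : ℕ}

theorem toCircle_inl_lt_toCircle_inl {i : Fin n} {j l : ℤ} (h : j < l) :
    toCircle (Sum.inl (j, i) : MbarPt n) < toCircle (Sum.inl (l, i)) := by
  have := strictMono_div_two_mul_abs_add_one (Int.cast_lt.mpr h : (j : ℝ) < l)
  simp only [toCircle] at this ⊢
  linarith

theorem toCircle_inr_lt_toCircle_inl (i : Fin n) (k : ℤ) :
    toCircle (Sum.inr i : MbarPt n) < toCircle (Sum.inl (k, i)) := by
  have := neg_half_lt_div_two_mul_abs_add_one (k : ℝ)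
  simp only [toCircle]
  linarith

theorem CycSBtw.cycSBtw_of_cycSBtw {x y z w : MbarPt n} (h₁ : CycSBtw x z y)
    (h₂ : CycSBtw y w x) : CycSBtw z y w := by
  unfold CycSBtw at *
  rcases h₁ with ⟨_, _⟩ | ⟨_, _⟩ | ⟨_, _⟩ <;> rcases h₂ with ⟨_, _⟩ | ⟨_, _⟩ | ⟨_, _⟩ <;>
    first
    | exact Or.inl ⟨by linarith, by linarith⟩
    | exact Or.inr (Or.inl ⟨by linarith, by linarith⟩)
    | exact Or.inr (Or.inr ⟨by linarith, by linarith⟩)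

theorem Crosses.symm {p q : Sym2 (MbarPt n)} (h : Crosses p q) : Crosses q p := by
  obtain ⟨x, y, z, w, rfl, rfl, h₁, h₂⟩ := h
  exact ⟨z, w, y, x, rfl, Sym2.eq_swap, h₁.cycSBtw_of_cycSBtw h₂, h₂.cycSBtw_of_cycSBtw h₁⟩

theorem Adj.symm {p q : Sym2 (MbarPt n)} (h : Adj p q) : Adj q p := by
  rcases h with h | ⟨hne, i, hp, hq⟩
  · exact Or.inl h.symm
  · exact Or.inr ⟨hne.symm, i, hq, hp⟩

theorem crosses_of_lt_of_lt {i : Fin n} {j m l : ℤ} (hjm : j < m) (hml : m < l) :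
    Crosses (s(Sum.inl (j, i), Sum.inl (l, i)) : Sym2 (MbarPt n)) s(Sum.inl (m, i), Sum.inr i) :=
  ⟨_, _, _, _, rfl, rfl,
    Or.inl ⟨toCircle_inl_lt_toCircle_inl hjm, toCircle_inl_lt_toCircle_inl hml⟩,
    Or.inr (Or.inl ⟨toCircle_inr_lt_toCircle_inl i j, toCircle_inl_lt_toCircle_inl (hjm.trans hml)⟩)⟩

theorem AdjChain.refl (T : Set (Sym2 (MbarPt n))) (p : Sym2 (MbarPt n)) : AdjChain T 0 p p :=
  rfl

theorem AdjChain.cons {T : Set (Sym2 (MbarPt n))} {m : ℕ} {p r q : Sym2 (MbarPt n)} (hr : r ∈ T)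
    (hpr : Adj p r) (h : AdjChain T m r q) : AdjChain T (m + 1) p q :=
  ⟨r, hr, hpr, h⟩

theorem rotArc_neg_rotArc (m : ℤ) (p : Sym2 (MbarPt n)) : rotArc (-m) (rotArc m p) = p := by
  induction p using Sym2.ind with
  | _ x y => rcases x with ⟨k, i⟩ | i <;> rcases y with ⟨l, j⟩ | j <;> simp [rotArc, rotPt]

theorem IsArc.rotArc {p : Sym2 (MbarPt n)} (hp : IsArc p) (m : ℤ) : IsArc (rotArc m p) := by
  refine ⟨fun hdiag => hp.1 (rotArc_neg_rotArc m p ▸ hdiag.map), fun k i hki => hp.2 (k + m) i ?_⟩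
  rw [← rotArc_neg_rotArc m p, hki]
  simp [_root_.rotArc, rotPt, add_right_comm k 1 m]

theorem isArc_of_mem_rClos {T : Set (Sym2 (MbarPt n))} (hT : ∀ p ∈ T, IsArc p) {q : Sym2 (MbarPt n)}
    (hq : q ∈ RClos T) : IsArc q := by
  obtain ⟨p, hp, m, rfl⟩ := hq
  exact (hT p hp).rotArc m

theorem inr_mem_of_inr_mem_rotArc {i : Fin n} {m : ℤ} {p : Sym2 (MbarPt n)}
    (h : Sum.inr i ∈ rotArc m p) : Sum.inr i ∈ p := by
  obtain ⟨x, hx, hxi⟩ := Sym2.mem_map.mp h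
  rcases x with ⟨k, j⟩ | j
  · simp [rotPt] at hxi
  · simp only [rotPt, Sum.inr.injEq] at hxi
    exact hxi ▸ hx

end General

section OneAccumulationPoint

def accArc (k : ℤ) : Sym2 (MbarPt 1) := s(Sum.inl (k, 0), Sum.inr 0)

theorem accArc_injective : Function.Injective accArc := by
  intro k l h
  simpa [accArc] using h

theorem rotArc_accArc (m k : ℤ) : rotArc m (accArc k) = accArc (k - m) := by
  simp [accArc, rotArc, rotPt]

theorem adj_accArc_accArc {k l : ℤ} (h : k ≠ l) : Adj (accArc k) (accArc l) :=
  Or.inr ⟨accArc_injective.ne h, 0, by simp [accArc], by simp [accArc]⟩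

theorem IsArc.eq_accArc_of_inr_mem {p : Sym2 (MbarPt 1)} (hp : IsArc p)
    (h : Sum.inr 0 ∈ p) : ∃ k, p = accArc k := by
  obtain ⟨y, rfl⟩ := Sym2.mem_iff_exists.mp h
  rcases y with ⟨k, i⟩ | i
  · exact ⟨k, by rw [Subsingleton.elim i 0, Sym2.eq_swap, accArc]⟩
  · exact absurd (Sym2.mk_isDiag_iff.mpr (by rw [Subsingleton.elim i 0])) hp.1

theorem IsArc.exists_lt_of_inr_notMem {p : Sym2 (MbarPt 1)} (hp : IsArc p)
    (h : Sum.inr 0 ∉ p) : ∃ j l : ℤ, j + 1 < l ∧ p = s(Sum.inl (j, 0), Sum.inl (l, 0)) := by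
  induction p using Sym2.ind with
  | _ x y =>
    rcases x with ⟨j, i⟩ | i
    · rcases y with ⟨l, i'⟩ | i'
      · obtain rfl : i = 0 := Subsingleton.elim _ _
        obtain rfl : i' = 0 := Subsingleton.elim _ _
        have hjl : j ≠ l := fun hjl => hp.1 (Sym2.mk_isDiag_iff.mpr (by rw [hjl]))
        have hl : l ≠ j + 1 := fun hl => hp.2 j 0 (by rw [hl])
        have hj : j ≠ l + 1 := fun hj => hp.2 l 0 (by rw [hj, Sym2.eq_swap])
        rcases lt_or_gt_of_ne hjl with hlt | hgt
        · exact ⟨j, l, by omega, rfl⟩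
        · exact ⟨l, j, by omega, Sym2.eq_swap⟩
      · exact absurd (by simp [Subsingleton.elim i' 0]) h
    · exact absurd (by simp [Subsingleton.elim i 0]) h

theorem IsArc.exists_adj_accArc {p : Sym2 (MbarPt 1)} (hp : IsArc p) : ∃ m, Adj p (accArc m) := by
  by_cases h : Sum.inr 0 ∈ p
  · obtain ⟨k, rfl⟩ := hp.eq_accArc_of_inr_mem h
    exact ⟨k + 1, adj_accArc_accArc (by omega)⟩
  · obtain ⟨j, l, hjl, rfl⟩ := hp.exists_lt_of_inr_notMem h
    exact ⟨j + 1, Or.inl (crosses_of_lt_of_lt (by omega) hjl)⟩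

variable {T : Set (Sym2 (MbarPt 1))} {k : ℤ}

theorem accArc_mem_rClos (hk : accArc k ∈ T) (m : ℤ) : accArc m ∈ RClos T :=
  ⟨accArc k, hk, k - m, by rw [rotArc_accArc, sub_sub_cancel]⟩

theorem connectedArcs_of_accArc_mem (hT : ∀ p ∈ T, IsArc p) (hk : accArc k ∈ T) :
    ConnectedArcs T := by
  intro p hp q hq
  obtain ⟨a, hpa⟩ := (isArc_of_mem_rClos hT hp).exists_adj_accArc
  obtain ⟨b, hqb⟩ := (isArc_of_mem_rClos hT hq).exists_adj_accArc
  have hbq : AdjChain (RClos T) 1 (accArc b) q := .cons hq hqb.symm (.refl _ q)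
  by_cases hab : a = b
  · subst hab
    exact ⟨2, .cons (accArc_mem_rClos hk a) hpa hbq⟩
  · exact ⟨3, .cons (accArc_mem_rClos hk a) hpa
      (.cons (accArc_mem_rClos hk b) (adj_accArc_accArc hab) hbq)⟩

theorem completeOrbit_of_accArc_mem (hk : accArc k ∈ T) : CompleteOrbit T := by
  rintro (⟨j, i⟩ | i)
  · exact ⟨accArc j, accArc_mem_rClos hk j, by simp [accArc, Subsingleton.elim i 0]⟩
  · exact ⟨accArc 0, accArc_mem_rClos hk 0, by simp [accArc, Subsingleton.elim i 0]⟩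

theorem CompleteOrbit.exists_accArc_mem (hT : ∀ p ∈ T, IsArc p) (horb : CompleteOrbit T) :
    ∃ k, accArc k ∈ T := by
  obtain ⟨q, ⟨p, hp, m, rfl⟩, hmem⟩ := horb (Sum.inr 0)
  obtain ⟨k, rfl⟩ := (hT p hp).eq_accArc_of_inr_mem (inr_mem_of_inr_mem_rotArc hmem)
  exact ⟨k, hp⟩

theorem MinimalArcSet.eq_singleton_accArc (hT : ∀ p ∈ T, IsArc p) (hmin : MinimalArcSet T)
    (hk : accArc k ∈ T) : T = {accArc k} := by
  refine Set.eq_singleton_iff_unique_mem.mpr ⟨hk, fun ℓ hℓ => ?_⟩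
  by_contra hne
  have hk' : accArc k ∈ T \ {ℓ} := ⟨hk, Ne.symm hne⟩
  exact hmin ℓ hℓ ⟨connectedArcs_of_accArc_mem (fun p hp => hT p hp.1) hk',
    completeOrbit_of_accArc_mem hk'⟩

theorem rClos_singleton_accArc (k : ℤ) : RClos {accArc k} = Set.range accArc := by
  ext q
  constructor
  · rintro ⟨p, rfl, m, rfl⟩
    exact ⟨k - m, (rotArc_accArc m k).symm⟩
  · rintro ⟨m, rfl⟩
    exact accArc_mem_rClos (Set.mem_singleton _) m

theorem hLenEq_singleton_accArc (k : ℤ) : HLenEq {accArc k} 1 := by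
  rw [HLenEq, HLenLE, rClos_singleton_accArc]
  refine ⟨?_, accArc k, ⟨k, rfl⟩, accArc (k + 1), ⟨k + 1, rfl⟩, fun m hm => ?_⟩
  · rintro _ ⟨a, rfl⟩ _ ⟨b, rfl⟩
    by_cases hab : a = b
    · exact ⟨0, zero_le_one, hab ▸ .refl _ _⟩
    · exact ⟨1, le_rfl, .cons ⟨b, rfl⟩ (adj_accArc_accArc hab) (.refl _ _)⟩
  · obtain rfl : m = 0 := Nat.lt_one_iff.mp hm
    exact accArc_injective.ne (by omega)

end OneAccumulationPoint

theorem homological_length_eq_one_of_minimal_generator_C1_general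
    (S : Finset (Sym2 (MbarPt 1)))
    (harc : ∀ p ∈ S, IsArc p)
    (horb : CompleteOrbit (↑S : Set (Sym2 (MbarPt 1))))
    (hmin : MinimalArcSet (↑S : Set (Sym2 (MbarPt 1)))) :
    HLenEq (↑S : Set (Sym2 (MbarPt 1))) 1 := by
  obtain ⟨k, hk⟩ := horb.exists_accArc_mem harc
  rw [hmin.eq_singleton_accArc harc hk]
  exact hLenEq_singleton_accArc k

/-- Corollary 5.13 of the paper: every finite set `S` of arcs of `M̄₁`
which is connected, has complete orbit and is minimal has homological length exactly `1`.
Equivalently, every minimal generator of the Paquette–Yıldırım category `C̄₁` has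
homological length `1`, whence the Orlov spectrum of `C̄₁` equals `{1}`. -/
theorem homological_length_eq_one_of_minimal_generator_C1
    (S : Finset (Sym2 (MbarPt 1)))
    (harc : ∀ p ∈ S, IsArc p)
    (hconn : ConnectedArcs (↑S : Set (Sym2 (MbarPt 1))))
    (horb : CompleteOrbit (↑S : Set (Sym2 (MbarPt 1))))
    (hmin : MinimalArcSet (↑S : Set (Sym2 (MbarPt 1)))) :
    HLenEq (↑S : Set (Sym2 (MbarPt 1))) 1 :=
  homological_length_eq_one_of_minimal_generator_C1_general S harc horb hmin
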